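/- Let q, d ≥ 2 be integers and let x be an integer. Then liminf_{N→∞} γ(N, q, d; 1, 0, 0, 0, x)/N ≥ (φ(d)/(d·q))·⌊q/d⌋, where φ is Euler's totient function; that is, liminf_{N→∞} (1/N)·|{n < N : u_q(n) ≡ −x (mod d)}| ≥ (φ(d)/(d·q))·⌊q/d⌋. -/

import Mathlib

open Filter

/-- `vq q n` is the `q`-adic valuation: `0` if `n = 0`, and otherwise the
largest `k` such that `q ^ k` divides `n`. -/
noncomputable def vq (q n : ℕ) : ℕ := if n = 0 then 0 else sSup {k : ℕ | q ^ k ∣ n}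

/-- `wq q n = ∑_{i=0}^n vq q i`. -/
noncomputable def wq (q n : ℕ) : ℕ := ∑ i ∈ Finset.range (n + 1), vq q i

/-- `uq q n = ∑_{i=0}^n wq q i`. -/
noncomputable def uq (q n : ℕ) : ℕ := ∑ i ∈ Finset.range (n + 1), wq q i

/-!
For `j < q` one has `u_q(qm + j) = u_q(qm) + j · w_q(qm)`, so when `w_q(qm)` is a unit modulo `d`
at least `⌊q/d⌋` of the `q` numbers `qm + j` satisfy the congruence. It remains to see that
`w_q(qm)` is a unit mod `d` for asymptotically at least a proportion `φ(d)/d` of the `m`.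

Since `w_q(qm) = m + w_q(q⌊m/q⌋)`, the map `W m = w_q(qm)` is additive on base-`q` digit blocks:
`W (m + q^K h) = W m + W (q^K h)` for `m < q^K`. Hence the distribution of `W` mod `d` on
`[0, q^(K+L))` is the one on `[0, q^K)` convolved with that of the window `h ↦ W (q^K h)`,
`h < q^L`. The residues of `W (q^K) = 1 + q + ⋯ + q^K` are eventually periodic, which lets a
window reach every residue. So each convolution step contributes uniform mass `d/q^L`, and after
`b` steps every residue has frequency at least `(1 - (1 - d/q^L)^b)/d`.
-/

open Finset

theorem Function.exists_eventually_periodic_iterate {α : Type*} [Finite α] (f : α → α)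
    (x : α) :
    ∃ a P, 0 < P ∧ ∀ s, a ≤ s → f^[s + P] x = f^[s] x := by
  obtain ⟨i, j, hij, heq⟩ := Finite.exists_ne_map_eq_of_infinite fun n => f^[n] x
  wlog hlt : i < j generalizing i j
  · exact this j i hij.symm heq.symm (by omega)
  refine ⟨i, j - i, by omega, fun s hs => ?_⟩
  obtain ⟨k, rfl⟩ := Nat.exists_eq_add_of_le hs
  calc f^[i + k + (j - i)] x = f^[k] (f^[j] x) := by
        rw [← Function.iterate_add_apply]; congr 1; omega
    _ = f^[i + k] x := by
        rw [← heq, ← Function.iterate_add_apply, add_comm]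

section Recursion

variable {q : ℕ}

theorem vq_eq_padicValNat (hq : 1 < q) (n : ℕ) : vq q n = padicValNat q n := by
  rcases eq_or_ne n 0 with rfl | hn
  · simp [vq]
  · have hset : {k : ℕ | q ^ k ∣ n} = Set.Iic (padicValNat q n) := by
      ext k
      exact Nat.pow_dvd_iff_le_padicValNat hq.ne' hn
    rw [vq, if_neg hn, hset, csSup_Iic]

theorem wq_succ (n : ℕ) : wq q (n + 1) = wq q n + vq q (n + 1) := sum_range_succ _ _

theorem uq_succ (n : ℕ) : uq q (n + 1) = uq q n + wq q (n + 1) := sum_range_succ _ _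

theorem wq_mul_add (hq : 1 < q) (m : ℕ) {j : ℕ} (hj : j < q) :
    wq q (q * m + j) = wq q (q * m) := by
  induction j with
  | zero => rfl
  | succ j ih =>
    have hndvd : ¬ q ∣ q * m + (j + 1) := by
      rw [Nat.dvd_add_right (dvd_mul_right q m)]
      exact Nat.not_dvd_of_pos_of_lt j.succ_pos hj
    rw [← add_assoc, wq_succ, ih (by omega), add_assoc, vq_eq_padicValNat hq,
      padicValNat.eq_zero_of_not_dvd hndvd, add_zero]

theorem uq_mul_add (hq : 1 < q) (m : ℕ) {j : ℕ} (hj : j < q) :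
    uq q (q * m + j) = uq q (q * m) + j * wq q (q * m) := by
  induction j with
  | zero => simp
  | succ j ih =>
    rw [← add_assoc, uq_succ, ih (by omega), add_assoc (q * m), wq_mul_add hq m hj]
    ring

theorem wq_base_mul (hq : 1 < q) (m : ℕ) : wq q (q * m) = m + wq q m := by
  induction m with
  | zero => simp [wq, vq]
  | succ m ih =>
    have hlast : q * (m + 1) = (q * m + (q - 1)) + 1 := by
      rw [mul_add]; omega
    rw [hlast, wq_succ, wq_mul_add hq m (by omega), ih, ← hlast, wq_succ,
      vq_eq_padicValNat hq, vq_eq_padicValNat hq, padicValNat_base_mul hq m.succ_ne_zero]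
    ring

theorem wq_base_mul_eq_add_div (hq : 1 < q) (m : ℕ) : wq q (q * m) = m + wq q (q * (m / q)) := by
  rw [wq_base_mul hq, ← wq_mul_add hq (m / q) (Nat.mod_lt m (by omega)), Nat.div_add_mod]

theorem wq_base_mul_add_pow_mul (hq : 1 < q) {K m : ℕ} (hm : m < q ^ K) (h : ℕ) :
    wq q (q * (m + q ^ K * h)) = wq q (q * m) + wq q (q * (q ^ K * h)) := by
  induction K generalizing m with
  | zero =>
    obtain rfl : m = 0 := by simpa using hm
    simp [wq, vq]
  | succ K ih =>
    have hq0 : 0 < q := by omega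
    have hdiv : ∀ n, (n + q ^ (K + 1) * h) / q = n / q + q ^ K * h := fun n => by
      rw [pow_succ', mul_assoc, Nat.add_mul_div_left _ _ hq0]
    have hm' : m / q < q ^ K := Nat.div_lt_of_lt_mul (by rwa [← pow_succ'])
    rw [wq_base_mul_eq_add_div hq, hdiv, ih hm', wq_base_mul_eq_add_div hq m,
      wq_base_mul_eq_add_div hq (q ^ (K + 1) * h), ← zero_add (q ^ (K + 1) * h), hdiv,
      Nat.zero_div, zero_add, zero_add]
    ring

theorem wq_self (hq : 1 < q) : wq q q = 1 := by
  have h := wq_base_mul hq 1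
  rw [mul_one] at h
  rw [h]
  simp [wq, sum_range_succ, vq_eq_padicValNat hq]

theorem wq_base_mul_pow_succ (hq : 1 < q) (K : ℕ) :
    wq q (q * q ^ (K + 1)) = q * wq q (q * q ^ K) + 1 := by
  have hstep : ∀ K, wq q (q * q ^ (K + 1)) = q ^ (K + 1) + wq q (q * q ^ K) := fun K => by
    rw [wq_base_mul_eq_add_div hq, pow_succ, Nat.mul_div_cancel _ (by omega)]
  induction K with
  | zero =>
    rw [hstep, pow_zero, mul_one, wq_self hq]
    ring
  | succ K ih =>
    calc wq q (q * q ^ (K + 2)) = q ^ (K + 2) + wq q (q * q ^ (K + 1)) := hstep _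
      _ = q * (q ^ (K + 1) + wq q (q * q ^ K)) + 1 := by rw [ih]; ring
      _ = q * wq q (q * q ^ (K + 1)) + 1 := by rw [hstep]

theorem exists_wq_base_mul_pow_periodic (hq : 1 < q) (d : ℕ) [NeZero d] :
    ∃ a P, 2 ≤ P ∧ ∀ K, a ≤ K →
      (wq q (q * q ^ (K + P)) : ZMod d) = wq q (q * q ^ K) := by
  have hiter : ∀ K, (wq q (q * q ^ K) : ZMod d) = (fun y : ZMod d => q * y + 1)^[K] 1 := by
    intro K
    induction K with
    | zero => simp [wq_self hq]
    | succ K ih =>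
      rw [Function.iterate_succ_apply', ← ih, wq_base_mul_pow_succ hq]
      push_cast
      ring
  obtain ⟨a, P, hP, hper⟩ :=
    Function.exists_eventually_periodic_iterate (fun y : ZMod d => q * y + 1) 1
  refine ⟨a, 2 * P, by omega, fun K hK => ?_⟩
  rw [hiter, hiter, two_mul, ← add_assoc, hper _ (by omega), hper _ hK]

theorem wq_window_prepend (hq : 1 < q) {P n c h : ℕ} (hc : c < q ^ P) (hh : h < q ^ (P * n))
    (K : ℕ) :
    c + q ^ P * h < q ^ (P * (n + 1)) ∧
      wq q (q * (q ^ K * (c + q ^ P * h))) =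
        wq q (q * (q ^ K * c)) + wq q (q * (q ^ (K + P) * h)) := by
  constructor
  · calc c + q ^ P * h < q ^ P * (h + 1) := by rw [mul_add_one]; omega
      _ ≤ q ^ P * q ^ (P * n) := Nat.mul_le_mul_left _ hh
      _ = q ^ (P * (n + 1)) := by rw [← pow_add]; ring_nf
  · have hlt : q ^ K * c < q ^ (K + P) := by
      rw [pow_add]
      exact Nat.mul_lt_mul_of_pos_left hc (by positivity)
    rw [← wq_base_mul_add_pow_mul hq hlt]
    ring_nf

theorem exists_wq_window_eq {d : ℕ} (hq : 1 < q) {a P : ℕ} (hP : 2 ≤ P)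
    (hper : ∀ K, a ≤ K → (wq q (q * q ^ (K + P)) : ZMod d) = wq q (q * q ^ K)) (A B : ℕ)
    {K : ℕ} (hK : a ≤ K) :
    ∃ h < q ^ (P * (A + B)), (wq q (q * (q ^ K * h)) : ZMod d) =
      A * wq q (q * q ^ K) + B * wq q (q * q ^ (K + 1)) := by
  induction A generalizing K with
  | zero =>
    induction B generalizing K with
    | zero => exact ⟨0, by positivity, by simp [wq, vq]⟩
    | succ B ih =>
      obtain ⟨h, hh, hval⟩ := ih (K := K + P) (by omega)
      obtain ⟨hlt, hsplit⟩ := wq_window_prepend hq (lt_self_pow₀ hq hP) hh K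
      rw [Nat.add_right_comm K P 1, hper K hK, hper (K + 1) (by omega)] at hval
      refine ⟨q + q ^ P * h, hlt, ?_⟩
      rw [hsplit, ← pow_succ, Nat.cast_add, hval]
      push_cast
      ring
  | succ A ih =>
    obtain ⟨h, hh, hval⟩ := ih (K := K + P) (by omega)
    obtain ⟨hlt, hsplit⟩ := wq_window_prepend hq (Nat.one_lt_pow (by omega) hq) hh K
    rw [Nat.add_right_comm K P 1, hper K hK, hper (K + 1) (by omega)] at hval
    refine ⟨1 + q ^ P * h, by rwa [Nat.add_right_comm A 1 B], ?_⟩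
    rw [hsplit, mul_one, Nat.cast_add, hval]
    push_cast
    ring

theorem exists_wq_window_surjective (hq : 1 < q) (d : ℕ) [NeZero d] :
    ∃ a L, d < q ^ L ∧ ∀ K, a ≤ K → ∀ t : ZMod d,
      ∃ h < q ^ L, (wq q (q * (q ^ K * h)) : ZMod d) = t := by
  obtain ⟨a, P, hP, hper⟩ := exists_wq_base_mul_pow_periodic hq d
  refine ⟨a, P * (2 * d), ?_, fun K hK t => ?_⟩
  · calc d < q ^ d := Nat.lt_pow_self hq
      _ ≤ q ^ (P * (2 * d)) := Nat.pow_le_pow_right (by omega) (by nlinarith)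
  · -- with `τ_K = w_q(q^{K+1})` we have `τ_{K+1} = q τ_K + 1`,
    -- so `(-q t) τ_K + t τ_{K+1} = t`
    obtain ⟨h, hh, hval⟩ := exists_wq_window_eq hq hP hper (-(q * t)).val t.val hK
    have hAB : (-(q * t)).val + t.val ≤ 2 * d := by
      have := ZMod.val_lt (-(q * t : ZMod d)); have := ZMod.val_lt t; omega
    refine ⟨h, hh.trans_le (Nat.pow_le_pow_right (by omega) (Nat.mul_le_mul_left P hAB)), ?_⟩
    rw [hval, ZMod.natCast_zmod_val, ZMod.natCast_zmod_val, wq_base_mul_pow_succ hq]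
    push_cast
    ring

end Recursion

theorem card_filter_range_mul (p : ℕ → Prop) [DecidablePred p] (A B : ℕ) :
    #{n ∈ range (A * B) | p n} = ∑ t ∈ range B, #{s ∈ range A | p (A * t + s)} := by
  induction B with
  | zero => simp
  | succ B ih =>
    rw [Nat.mul_succ, sum_range_succ, ← ih]
    simp only [card_filter, sum_range_add]

section BlockFrequency

variable {G : Type*}

theorem sum_add_mul_le_sum_range_sub [AddCommGroup G] [Fintype G] (c : G → ℝ) {e : ℝ}
    (hc : ∀ t, e ≤ c t) (g : ℕ → G) {n : ℕ} (hg : ∀ t, ∃ h < n, g h = t) (r : G) :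
    ∑ t, c t + (n - Fintype.card G) * e ≤ ∑ h ∈ range n, c (r - g h) := by
  choose ι hιn hι using hg
  have hinj : Function.Injective ι := fun t t' htt' => by rw [← hι t, ← hι t', htt']
  have hsub : univ.image ι ⊆ range n := by
    simpa [Finset.subset_iff] using hιn
  have hcard : Fintype.card G ≤ n := by
    simpa [card_image_of_injective _ hinj] using card_le_card hsub
  have himage : ∑ h ∈ univ.image ι, c (r - g h) = ∑ t, c t := by
    rw [sum_image fun t _ t' _ => (hinj ·)]
    simp only [hι]
    exact (Equiv.subLeft r).sum_comp c
  have hrest :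
      ((n - Fintype.card G : ℕ) : ℝ) * e ≤
        ∑ h ∈ range n \ univ.image ι, c (r - g h) := by
    have := card_nsmul_le_sum (range n \ univ.image ι) (fun h => c (r - g h)) e fun h _ => hc _
    rwa [card_sdiff_of_subset hsub, card_range, card_image_of_injective _ hinj, card_univ,
      nsmul_eq_mul] at this
  rw [← sum_sdiff hsub, himage, Nat.cast_sub hcard] at *
  linarith

noncomputable def blockFreq [DecidableEq G] (f : ℕ → G) (q K : ℕ) (r : G) : ℝ :=
  #{m ∈ range (q ^ K) | f m = r} / (q : ℝ) ^ K

theorem sum_blockFreq [Fintype G] [DecidableEq G] (f : ℕ → G) {q : ℕ} (hq : 0 < q) (K : ℕ) :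
    ∑ r, blockFreq f q K r = 1 := by
  have hfiber := card_eq_sum_card_fiberwise (s := range (q ^ K)) (t := univ) (f := f)
    fun m _ => mem_univ (f m)
  rw [card_range] at hfiber
  simp only [blockFreq, ← sum_div, ← Nat.cast_sum, ← hfiber]
  push_cast
  exact div_self (by positivity)

theorem blockFreq_add [AddCommGroup G] [DecidableEq G] {f : ℕ → G} {q : ℕ}
    (hf : ∀ K m h, m < q ^ K → f (m + q ^ K * h) = f m + f (q ^ K * h)) (K L : ℕ) (r : G) :
    blockFreq f q (K + L) r =
      (∑ h ∈ range (q ^ L), blockFreq f q K (r - f (q ^ K * h))) / (q : ℝ) ^ L := by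
  have hcount : #{n ∈ range (q ^ (K + L)) | f n = r} =
      ∑ h ∈ range (q ^ L), #{m ∈ range (q ^ K) | f m = r - f (q ^ K * h)} := by
    rw [pow_add, card_filter_range_mul]
    refine sum_congr rfl fun h _ => congrArg card (filter_congr fun m hm => ?_)
    rw [add_comm, hf _ _ _ (mem_range.1 hm), eq_sub_iff_add_eq]
  simp only [blockFreq, ← sum_div, hcount]
  push_cast
  rw [pow_add, div_div]

theorem le_blockFreq [AddCommGroup G] [Fintype G] [DecidableEq G] {f : ℕ → G} {q a L : ℕ}
    (hq : 0 < q)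
    (hf : ∀ K m h, m < q ^ K → f (m + q ^ K * h) = f m + f (q ^ K * h))
    (hsurj : ∀ K, a ≤ K → ∀ t, ∃ h < q ^ L, f (q ^ K * h) = t) (b : ℕ) (r : G) :
    (1 - (1 - Fintype.card G / (q : ℝ) ^ L) ^ b) / Fintype.card G ≤
      blockFreq f q (a + L * b) r := by
  have hqL : 0 < (q : ℝ) ^ L := by positivity
  have hG : 0 < (Fintype.card G : ℝ) := Nat.cast_pos.2 Fintype.card_pos
  induction b generalizing r with
  | zero =>
    simp only [pow_zero, sub_self, zero_div, blockFreq]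
    positivity
  | succ b ih =>
    have hsum := sum_add_mul_le_sum_range_sub _ ih (fun h => f (q ^ (a + L * b) * h))
      (hsurj _ (by omega)) r
    rw [sum_blockFreq f hq] at hsum
    rw [mul_add_one, ← add_assoc, blockFreq_add hf, le_div_iff₀ hqL]
    push_cast at hsum
    refine le_of_eq_of_le ?_ hsum
    set θ := 1 - (Fintype.card G : ℝ) / (q : ℝ) ^ L with hθ
    have hG' : (Fintype.card G : ℝ) = (q : ℝ) ^ L * (1 - θ) := by
      rw [hθ]
      field_simp
      ring
    have hθ1 : 1 - θ ≠ 0 := by rw [hG'] at hG; intro h; simp [h] at hG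
    rw [hG']
    field_simp
    ring

end BlockFrequency

theorem card_filter_isUnit_eq_totient (d : ℕ) [NeZero d] :
    #{ρ : ZMod d | IsUnit ρ} = Nat.totient d := by
  have : ({ρ : ZMod d | IsUnit ρ} : Finset (ZMod d)) =
      univ.map ⟨Units.val, Units.val_injective⟩ := by
    ext ρ
    simp only [Finset.mem_filter, Finset.mem_univ, true_and, Finset.mem_map,
      Function.Embedding.coeFn_mk]
    rfl
  rw [this, card_map, card_univ, ZMod.card_units_eq_totient]

theorem totient_mul_le_card_filter_isUnit {d q K : ℕ} [NeZero d] (hq : 0 < q) {f : ℕ → ZMod d}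
    {e : ℝ} (he : ∀ r, e ≤ blockFreq f q K r) (C : ZMod d) :
    Nat.totient d * ((q : ℝ) ^ K * e) ≤ #{m ∈ range (q ^ K) | IsUnit (f m + C)} := by
  rw [card_eq_sum_card_fiberwise (t := {ρ : ZMod d | IsUnit ρ}) (f := (f · + C))
    fun m hm => by simpa using (mem_filter.1 hm).2, ← card_filter_isUnit_eq_totient,
    ← nsmul_eq_mul, ← sum_const, Nat.cast_sum]
  refine sum_le_sum fun ρ hρ => ?_
  have hfiber : {m ∈ {m ∈ range (q ^ K) | IsUnit (f m + C)} | f m + C = ρ} =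
      {m ∈ range (q ^ K) | f m = ρ - C} := by
    rw [filter_filter]
    refine filter_congr fun m _ => ?_
    rw [eq_sub_iff_add_eq]
    exact ⟨And.right, fun h => ⟨h ▸ (mem_filter.1 hρ).2, h⟩⟩
  have := he (ρ - C)
  rwa [blockFreq, le_div_iff₀ (by positivity), mul_comm, ← hfiber] at this

theorem div_le_card_filter_natCast_eq {d : ℕ} [NeZero d] (n : ℕ) (β : ZMod d) :
    n / d ≤ #{j ∈ range n | ((j : ℕ) : ZMod d) = β} := by
  have hcount : #{j ∈ range n | ((j : ℕ) : ZMod d) = β} = n.count (· ≡ β.val [MOD d]) := by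
    rw [Nat.count_eq_card_filter_range]
    refine congrArg card (filter_congr fun j _ => ?_)
    rw [← ZMod.natCast_eq_natCast_iff, ZMod.natCast_zmod_val]
  rw [hcount, Nat.count_modEq_card n (Nat.pos_of_neZero d)]
  omega

theorem div_le_card_filter_uq_mul_add {q d : ℕ} [NeZero d] (hq : 1 < q) (x : ℤ) {m : ℕ}
    (hm : IsUnit (wq q (q * m) : ZMod d)) :
    q / d ≤ #{j ∈ range q | ((uq q (q * m + j) : ℤ) + x) % d = 0} := by
  refine (div_le_card_filter_natCast_eq q
    (-(uq q (q * m) + x : ZMod d) * ((hm.unit⁻¹ : (ZMod d)ˣ) : ZMod d))).trans_eq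
    (congrArg card (filter_congr fun j hj => ?_))
  rw [← Int.dvd_iff_emod_eq_zero, ← ZMod.intCast_zmod_eq_zero_iff_dvd,
    Units.eq_mul_inv_iff_mul_eq, IsUnit.unit_spec, uq_mul_add hq m (mem_range.1 hj),
    eq_neg_iff_add_eq_zero]
  push_cast
  ring_nf

theorem le_card_filter_uq_block {q d : ℕ} [NeZero d] (hq : 1 < q) (x : ℤ) {K : ℕ} {e : ℝ}
    (he : ∀ r, e ≤ blockFreq (fun m => (wq q (q * m) : ZMod d)) q K r) (t : ℕ) :
    (q / d : ℕ) * (Nat.totient d * ((q : ℝ) ^ K * e)) ≤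
      #{s ∈ range (q ^ (K + 1)) | ((uq q (q ^ (K + 1) * t + s) : ℤ) + x) % d = 0} := by
  have hunits := totient_mul_le_card_filter_isUnit (by omega) he (wq q (q * (q ^ K * t)))
  have hblock : (q / d) * #{m ∈ range (q ^ K) |
      IsUnit ((wq q (q * m) : ZMod d) + wq q (q * (q ^ K * t)))} ≤
      #{s ∈ range (q ^ (K + 1)) | ((uq q (q ^ (K + 1) * t + s) : ℤ) + x) % d = 0} := by
    rw [pow_succ', card_filter_range_mul, card_filter, mul_sum]
    refine sum_le_sum fun m hmK => ?_
    split_ifs with hm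
    · rw [← Nat.cast_add, ← wq_base_mul_add_pow_mul hq (mem_range.1 hmK)] at hm
      simp only [show ∀ j, q * q ^ K * t + (q * m + j) = q * (m + q ^ K * t) + j from
        fun j => by ring]
      simpa using div_le_card_filter_uq_mul_add hq x hm
    · simp
  calc _ ≤ ((q / d : ℕ) : ℝ) * #{m ∈ range (q ^ K) |
        IsUnit ((wq q (q * m) : ZMod d) + wq q (q * (q ^ K * t)))} := by gcongr
    _ ≤ _ := by exact_mod_cast hblock

theorem le_liminf_card_filter_range_div {p : ℕ → Prop} [DecidablePred p] {Q : ℕ} (hQ : 0 < Q)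
    {c : ℝ} (hc0 : 0 ≤ c) (hc : ∀ t, c ≤ #{s ∈ range Q | p (Q * t + s)}) :
    c / Q ≤ atTop.liminf fun N : ℕ => (#{n ∈ range N | p n} : ℝ) / N := by
  have hcount : ∀ N, ((N / Q : ℕ) : ℝ) * c ≤ #{n ∈ range N | p n} := fun N =>
    calc ((N / Q : ℕ) : ℝ) * c = ∑ _t ∈ range (N / Q), c := by simp
      _ ≤ ∑ t ∈ range (N / Q), (#{s ∈ range Q | p (Q * t + s)} : ℝ) :=
        sum_le_sum fun t _ => hc t
      _ = #{n ∈ range (Q * (N / Q)) | p n} := by rw [card_filter_range_mul]; push_cast; rfl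
      _ ≤ #{n ∈ range N | p n} := by
        gcongr
        exact Nat.mul_div_le N Q
  have hlower : ∀ᶠ N : ℕ in atTop, c / Q - c / N ≤ (#{n ∈ range N | p n} : ℝ) / N := by
    filter_upwards [eventually_gt_atTop 0] with N hN
    have hN' : (N : ℝ) < Q * ((N / Q : ℕ) + 1) := by exact_mod_cast Nat.lt_mul_div_succ N hQ
    rw [le_div_iff₀ (by positivity)]
    calc (c / Q - c / N) * N = c * (N / Q - 1) := by field_simp
      _ ≤ c * (N / Q : ℕ) := by
        gcongr
        rw [sub_le_iff_le_add, div_le_iff₀ (by positivity)]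
        linarith
      _ ≤ _ := by linarith [hcount N]
  have htend : Tendsto (fun N : ℕ => c / Q - c / N) atTop (nhds (c / Q)) := by
    simpa using tendsto_const_nhds.sub (tendsto_const_div_atTop_nhds_zero_nat c)
  have hbdd : IsBoundedUnder (· ≤ ·) atTop fun N : ℕ => (#{n ∈ range N | p n} : ℝ) / N :=
    isBoundedUnder_of ⟨1, fun N => div_le_one_of_le₀ (by simpa using card_filter_le (range N) p)
      (by positivity)⟩
  rw [← htend.liminf_eq]
  exact liminf_le_liminf hlower htend.isBoundedUnder_ge hbdd.isCoboundedUnder_ge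

theorem le_of_forall_mul_one_sub_pow_le {α y θ : ℝ} (hθ0 : 0 ≤ θ) (hθ1 : θ < 1)
    (h : ∀ b : ℕ, α * (1 - θ ^ b) ≤ y) : α ≤ y :=
  le_of_tendsto' (by simpa using tendsto_const_nhds.mul ((tendsto_const_nhds (x := (1 : ℝ))).sub
    (tendsto_pow_atTop_nhds_zero_of_lt_one hθ0 hθ1))) h

theorem stmt_13 (q d : ℕ) (hq : 2 ≤ q) (hd : 2 ≤ d) (x : ℤ) :
    (Nat.totient d : ℝ) / (d * q) * (q / d : ℕ) ≤
      atTop.liminf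
        (fun N : ℕ =>
          (((Finset.range N).filter fun n =>
              ((uq q n : ℤ) + x) % (d : ℤ) = 0).card : ℝ) / N) := by
  have : NeZero d := ⟨by omega⟩
  obtain ⟨a, L, hdL, hsurj⟩ := exists_wq_window_surjective (q := q) (by omega) d
  have hW : ∀ K m h, m < q ^ K → (wq q (q * (m + q ^ K * h)) : ZMod d) =
      wq q (q * m) + wq q (q * (q ^ K * h)) := fun K m h hm => by
    rw [wq_base_mul_add_pow_mul (by omega) hm, Nat.cast_add]
  have hdL' : (d : ℝ) < (q : ℝ) ^ L := by exact_mod_cast hdL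
  have hθ0 : 0 ≤ 1 - d / (q : ℝ) ^ L := sub_nonneg.2 ((div_le_one (by positivity)).2 hdL'.le)
  refine le_of_forall_mul_one_sub_pow_le hθ0 (sub_lt_self _ (by positivity)) fun b => ?_
  have hfreq := le_blockFreq (f := fun m => (wq q (q * m) : ZMod d)) (by omega) hW hsurj b
  rw [ZMod.card] at hfreq
  have hθb : 0 ≤ 1 - (1 - d / (q : ℝ) ^ L) ^ b :=
    sub_nonneg.2 (pow_le_one₀ hθ0 (sub_le_self _ (by positivity)))
  refine le_of_eq_of_le ?_ (le_liminf_card_filter_range_div (by positivity) (by positivity)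
    (le_card_filter_uq_block (by omega) x hfreq))
  push_cast
  field_simp
  ring
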